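/- arXiv:2201.00261 — 4 statements merged into one kernel-verified Lean document; each statement's English description precedes it below -/
import Mathlib

section
/- Let r > 0, let x₁, x₂, x₃ ∈ ℝ³, and let x ∈ ℝ³ with x ≠ 0 be of the form x = x₁ + ξ(x₂−x₁) + η(x₃−x₁) for some ξ, η ∈ ℝ. Define u = (r/‖x‖)·((x₂−x₁) − (⟨x, x₂−x₁⟩/⟨x,x⟩)·x) and v = (r/‖x‖)·((x₃−x₁) − (⟨x, x₃−x₁⟩/⟨x,x⟩)·x). Then u × v = (r²·det[x₁,x₂,x₃]/‖x‖⁴)·x; in particular ‖u × v‖ = (r²/‖x‖³)·|det[x₁,x₂,x₃]|. -/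
open scoped RealInnerProductSpace

/-- Determinant of the 3×3 matrix with columns `a`, `b`, `c`. -/
noncomputable def det3 (a b c : EuclideanSpace ℝ (Fin 3)) : ℝ :=
  Matrix.det (Matrix.transpose (Matrix.of ![(a : Fin 3 → ℝ), (b : Fin 3 → ℝ), (c : Fin 3 → ℝ)]))

noncomputable def cross3 (a b : EuclideanSpace ℝ (Fin 3)) : EuclideanSpace ℝ (Fin 3) :=
  WithLp.toLp 2 (crossProduct (a : Fin 3 → ℝ) (b : Fin 3 → ℝ))

/-!
Write `p`, `q` for the components of `x₂ - x₁`, `x₃ - x₁` orthogonal to `x`. Since `p, q ⊥ x`,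
the vector triple product gives `(p × q) × x = ⟪p, x⟫ q - ⟪q, x⟫ p = 0`, and then
`0 = x × ((p × q) × x) = ‖x‖² (p × q) - ⟪p × q, x⟫ x`, so `p × q = (det[p, q, x] / ‖x‖²) x`.
The determinant is unchanged by subtracting multiples of `x` from its first two columns, and as
`x` lies on the plane through `x₁, x₂, x₃`, `det[x₂ - x₁, x₃ - x₁, x] = det[x₁, x₂, x₃]`.
-/

open Matrix

theorem dotProduct_self_smul_cross_of_dotProduct_eq_zero {R : Type*} [CommRing R]
    {x v w : Fin 3 → R} (hv : v ⬝ᵥ x = 0) (hw : w ⬝ᵥ x = 0) :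
    (x ⬝ᵥ x) • v ⨯₃ w = (v ⨯₃ w ⬝ᵥ x) • x := by
  have h : v ⨯₃ w ⨯₃ x = 0 := by
    rw [cross_cross_eq_smul_sub_smul, hv, hw, zero_smul, zero_smul, sub_zero]
  have hexp := cross_cross_eq_smul_sub_smul' x (v ⨯₃ w) x
  rw [h, map_zero] at hexp
  rw [sub_eq_zero.mp hexp.symm, dotProduct_comm]

theorem inner_sub_div_inner_self_smul_eq_zero {E : Type*} [NormedAddCommGroup E]
    [InnerProductSpace ℝ E] {x : E} (hx : x ≠ 0) (a : E) : ⟪a - (⟪x, a⟫ / ⟪x, x⟫) • x, x⟫ = 0 := by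
  rw [inner_sub_left, real_inner_smul_left, real_inner_comm,
    div_mul_cancel₀ _ (inner_self_ne_zero.mpr hx), sub_self]

theorem EuclideanSpace.real_inner_eq_dotProduct {ι : Type*} [Fintype ι]
    (x y : EuclideanSpace ℝ ι) : ⟪x, y⟫ = x.ofLp ⬝ᵥ y.ofLp := by
  rw [EuclideanSpace.inner_eq_star_dotProduct, star_trivial, dotProduct_comm]

theorem det3_eq_inner_cross3 (a b c : EuclideanSpace ℝ (Fin 3)) :
    det3 a b c = ⟪cross3 a b, c⟫ := by
  rw [det3, det_transpose, EuclideanSpace.real_inner_eq_dotProduct, cross3, dotProduct_comm,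
    triple_product_permutation, triple_product_eq_det]
  rfl

theorem cross3_smul_smul (c d : ℝ) (a b : EuclideanSpace ℝ (Fin 3)) :
    cross3 (c • a) (d • b) = (c * d) • cross3 a b := by
  simp [cross3, mul_smul, smul_comm c d]

theorem det3_eq (a b c : EuclideanSpace ℝ (Fin 3)) :
    det3 a b c = a 0 * (b 1 * c 2 - b 2 * c 1) - b 0 * (a 1 * c 2 - a 2 * c 1)
      + c 0 * (a 1 * b 2 - a 2 * b 1) := by
  rw [det3, det_transpose, det_fin_three]
  simp only [of_apply, cons_val', cons_val_fin_one, cons_val_zero, cons_val_one, cons_val]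
  ring

theorem det3_sub_smul_sub_smul (a b x : EuclideanSpace ℝ (Fin 3)) (α β : ℝ) :
    det3 (a - α • x) (b - β • x) x = det3 a b x := by
  simp only [det3_eq, PiLp.sub_apply, PiLp.smul_apply, smul_eq_mul]
  ring

theorem det3_sub_sub_of_eq_affineCombination {x₁ x₂ x₃ x : EuclideanSpace ℝ (Fin 3)} {ξ η : ℝ}
    (hx : x = x₁ + ξ • (x₂ - x₁) + η • (x₃ - x₁)) :
    det3 (x₂ - x₁) (x₃ - x₁) x = det3 x₁ x₂ x₃ := by
  simp only [det3_eq, hx, PiLp.add_apply, PiLp.sub_apply, PiLp.smul_apply, smul_eq_mul]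
  ring

theorem inner_self_smul_cross3_of_inner_eq_zero {x p q : EuclideanSpace ℝ (Fin 3)}
    (hp : ⟪p, x⟫ = 0) (hq : ⟪q, x⟫ = 0) : ⟪x, x⟫ • cross3 p q = ⟪cross3 p q, x⟫ • x := by
  rw [EuclideanSpace.real_inner_eq_dotProduct] at hp hq
  apply WithLp.ofLp_injective
  simpa only [WithLp.ofLp_smul, EuclideanSpace.real_inner_eq_dotProduct, cross3]
    using dotProduct_self_smul_cross_of_dotProduct_eq_zero hp hq

theorem cross3_sub_smul_sub_smul_eq_det3_smul {x : EuclideanSpace ℝ (Fin 3)} (hx : x ≠ 0)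
    (a b : EuclideanSpace ℝ (Fin 3)) :
    cross3 (a - (⟪x, a⟫ / ⟪x, x⟫) • x) (b - (⟪x, b⟫ / ⟪x, x⟫) • x)
      = (det3 a b x / ⟪x, x⟫) • x := by
  rw [← det3_sub_smul_sub_smul a b x (⟪x, a⟫ / ⟪x, x⟫) (⟪x, b⟫ / ⟪x, x⟫), det3_eq_inner_cross3,
    div_eq_inv_mul (⟪cross3 _ _, x⟫), mul_smul,
    ← inner_self_smul_cross3_of_inner_eq_zero (inner_sub_div_inner_self_smul_eq_zero hx a)
      (inner_sub_div_inner_self_smul_eq_zero hx b), inv_smul_smul₀ (inner_self_ne_zero.mpr hx)]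

theorem stmt_2_general (r : ℝ) (x₁ x₂ x₃ x : EuclideanSpace ℝ (Fin 3)) (hx : x ≠ 0)
    (ξ η : ℝ) (hxform : x = x₁ + ξ • (x₂ - x₁) + η • (x₃ - x₁))
    (u v : EuclideanSpace ℝ (Fin 3))
    (hu : u = (r / ‖x‖) • ((x₂ - x₁) - (⟪x, x₂ - x₁⟫ / ⟪x, x⟫) • x))
    (hv : v = (r / ‖x‖) • ((x₃ - x₁) - (⟪x, x₃ - x₁⟫ / ⟪x, x⟫) • x)) :
    cross3 u v = ((r ^ 2 * det3 x₁ x₂ x₃) / ‖x‖ ^ 4) • x ∧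
      ‖cross3 u v‖ = (r ^ 2 / ‖x‖ ^ 3) * |det3 x₁ x₂ x₃| := by
  have hnorm : ‖x‖ ≠ 0 := norm_ne_zero_iff.mpr hx
  have hcross : cross3 u v = ((r ^ 2 * det3 x₁ x₂ x₃) / ‖x‖ ^ 4) • x := by
    rw [hu, hv, cross3_smul_smul, cross3_sub_smul_sub_smul_eq_det3_smul hx,
      det3_sub_sub_of_eq_affineCombination hxform, real_inner_self_eq_norm_sq, smul_smul]
    congr 1
    field_simp
  refine ⟨hcross, ?_⟩
  rw [hcross, norm_smul, Real.norm_eq_abs, abs_div, abs_mul, abs_of_nonneg (sq_nonneg r),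
    abs_of_nonneg (by positivity : (0 : ℝ) ≤ ‖x‖ ^ 4)]
  field_simp

theorem stmt_2 (r : ℝ) (hr : 0 < r) (x₁ x₂ x₃ x : EuclideanSpace ℝ (Fin 3)) (hx : x ≠ 0)
    (ξ η : ℝ) (hxform : x = x₁ + ξ • (x₂ - x₁) + η • (x₃ - x₁))
    (u v : EuclideanSpace ℝ (Fin 3))
    (hu : u = (r / ‖x‖) • ((x₂ - x₁) - (⟪x, x₂ - x₁⟫ / ⟪x, x⟫) • x))
    (hv : v = (r / ‖x‖) • ((x₃ - x₁) - (⟪x, x₃ - x₁⟫ / ⟪x, x⟫) • x)) :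
    cross3 u v = ((r ^ 2 * det3 x₁ x₂ x₃) / ‖x‖ ^ 4) • x ∧
      ‖cross3 u v‖ = (r ^ 2 / ‖x‖ ^ 3) * |det3 x₁ x₂ x₃| :=
  stmt_2_general r x₁ x₂ x₃ x hx ξ η hxform u v hu hv
end

section
/- Let r > 0 and let x₁, x₂, x₃ ∈ ℝ³ satisfy ‖x₁‖ = ‖x₂‖ = ‖x₃‖ = r and ‖x_i − x_j‖ ≤ h for all i, j. Then for all λ₁, λ₂, λ₃ ≥ 0 with λ₁ + λ₂ + λ₃ = 1, the convex combination x = λ₁x₁ + λ₂x₂ + λ₃x₃ satisfies r² − h²/3 ≤ ‖x‖² ≤ r². -/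
/-!
For weights `wᵢ` summing to one, `‖∑ wᵢ xᵢ‖² = ∑ wᵢ ‖xᵢ‖² - ½ ∑ᵢ ∑ⱼ wᵢ wⱼ ‖xᵢ - xⱼ‖²`.
On a sphere of radius `r` the first sum is `r²`. For `wᵢ ≥ 0` the double sum is nonnegative and,
since its diagonal vanishes, at most `h² (1 - ∑ wᵢ²) ≤ h² (1 - 1/n)` by Cauchy–Schwarz.
-/

open Finset

section
variable {E : Type*} [NormedAddCommGroup E] [InnerProductSpace ℝ E] {ι : Type*}

theorem norm_sum_smul_sq_eq_sum_sub_sum_sum (s : Finset ι) (w : ι → ℝ) (x : ι → E)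
    (hw : ∑ i ∈ s, w i = 1) :
    ‖∑ i ∈ s, w i • x i‖ ^ 2 = ∑ i ∈ s, w i * ‖x i‖ ^ 2 -
      (∑ i ∈ s, ∑ j ∈ s, w i * w j * ‖x i - x j‖ ^ 2) / 2 := by
  have hnorm : ‖∑ i ∈ s, w i • x i‖ ^ 2 =
      ∑ i ∈ s, ∑ j ∈ s, w i * w j * inner ℝ (x i) (x j) := by
    simp only [← real_inner_self_eq_norm_sq, sum_inner, inner_sum, real_inner_smul_left,
      real_inner_smul_right]
    exact sum_congr rfl fun i _ => sum_congr rfl fun j _ => by rw [real_inner_comm]; ring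
  have hleft : ∑ i ∈ s, ∑ j ∈ s, w i * w j * ‖x i‖ ^ 2 = ∑ i ∈ s, w i * ‖x i‖ ^ 2 := by
    simp only [mul_right_comm _ _ (‖x _‖ ^ 2), ← mul_sum, hw, mul_one]
  have hright : ∑ i ∈ s, ∑ j ∈ s, w i * w j * ‖x j‖ ^ 2 = ∑ i ∈ s, w i * ‖x i‖ ^ 2 := by
    rw [sum_comm]; simp only [mul_comm (w _) (w _)]; exact hleft
  have hcross : ∑ i ∈ s, ∑ j ∈ s, w i * w j * (2 * inner ℝ (x i) (x j)) =
      2 * ‖∑ i ∈ s, w i • x i‖ ^ 2 := by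
    simp only [hnorm, mul_sum, mul_left_comm _ (2 : ℝ)]
  simp only [norm_sub_sq_real, mul_add, mul_sub, sum_add_distrib, sum_sub_distrib, hleft,
    hright, hcross]
  ring

theorem sum_sum_mul_le_mul_one_sub_sum_sq (s : Finset ι) (w : ι → ℝ) (d : ι → ι → ℝ) (c : ℝ)
    (hw0 : ∀ i ∈ s, 0 ≤ w i) (hw : ∑ i ∈ s, w i = 1) (hd : ∀ i ∈ s, d i i = 0)
    (hdc : ∀ i ∈ s, ∀ j ∈ s, i ≠ j → d i j ≤ c) :
    ∑ i ∈ s, ∑ j ∈ s, w i * w j * d i j ≤ c * (1 - ∑ i ∈ s, w i ^ 2) := by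
  classical
  have hrow : ∀ i ∈ s, ∑ j ∈ s, w i * w j * d i j ≤ c * (w i - w i ^ 2) := fun i hi =>
    calc ∑ j ∈ s, w i * w j * d i j = ∑ j ∈ s.erase i, w i * w j * d i j :=
          (sum_erase _ (by rw [hd i hi, mul_zero])).symm
      _ ≤ ∑ j ∈ s.erase i, w i * w j * c := by
          refine sum_le_sum fun j hj => ?_
          obtain ⟨hji, hj⟩ := mem_erase.1 hj
          exact mul_le_mul_of_nonneg_left (hdc i hi j hj hji.symm)
            (mul_nonneg (hw0 i hi) (hw0 j hj))
      _ = c * (w i - w i ^ 2) := by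
          rw [← sum_mul, ← mul_sum, sum_erase_eq_sub hi, hw]; ring
  calc ∑ i ∈ s, ∑ j ∈ s, w i * w j * d i j ≤ ∑ i ∈ s, c * (w i - w i ^ 2) := sum_le_sum hrow
    _ = c * (1 - ∑ i ∈ s, w i ^ 2) := by rw [← mul_sum, sum_sub_distrib, hw]

theorem one_div_card_le_sum_sq (s : Finset ι) (w : ι → ℝ) (hw : ∑ i ∈ s, w i = 1) :
    1 / (#s : ℝ) ≤ ∑ i ∈ s, w i ^ 2 := by
  have hs : 0 < (#s : ℝ) := by
    rw [Nat.cast_pos, card_pos]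
    exact nonempty_of_sum_ne_zero (by rw [hw]; exact one_ne_zero)
  rw [div_le_iff₀' hs]
  simpa [hw] using sq_sum_le_card_mul_sum_sq (s := s) (f := w)

theorem norm_sum_smul_sq_mem_Icc_of_norm_eq (s : Finset ι) (w : ι → ℝ) (x : ι → E) (r h : ℝ)
    (hw0 : ∀ i ∈ s, 0 ≤ w i) (hw : ∑ i ∈ s, w i = 1) (hx : ∀ i ∈ s, ‖x i‖ = r)
    (hxh : ∀ i ∈ s, ∀ j ∈ s, i ≠ j → ‖x i - x j‖ ≤ h) :
    ‖∑ i ∈ s, w i • x i‖ ^ 2 ∈ Set.Icc (r ^ 2 - h ^ 2 * (1 - 1 / #s) / 2) (r ^ 2) := by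
  have hsphere : ∑ i ∈ s, w i * ‖x i‖ ^ 2 = r ^ 2 := by
    rw [sum_congr rfl fun i hi => by rw [hx i hi], ← sum_mul, hw, one_mul]
  have hnonneg : 0 ≤ ∑ i ∈ s, ∑ j ∈ s, w i * w j * ‖x i - x j‖ ^ 2 :=
    sum_nonneg fun i hi => sum_nonneg fun j hj =>
      mul_nonneg (mul_nonneg (hw0 i hi) (hw0 j hj)) (sq_nonneg _)
  have hle := sum_sum_mul_le_mul_one_sub_sum_sq s w (fun i j => ‖x i - x j‖ ^ 2) (h ^ 2) hw0 hw
    (fun i _ => by simp) fun i hi j hj hij =>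
      pow_le_pow_left₀ (norm_nonneg _) (hxh i hi j hj hij) 2
  have hcard := mul_le_mul_of_nonneg_left (one_div_card_le_sum_sq s w hw) (sq_nonneg h)
  rw [Set.mem_Icc, norm_sum_smul_sq_eq_sum_sub_sum_sum s w x hw, hsphere]
  constructor <;> linarith

end

theorem stmt_7_general (r h : ℝ) (x₁ x₂ x₃ : EuclideanSpace ℝ (Fin 3))
    (h1 : ‖x₁‖ = r) (h2 : ‖x₂‖ = r) (h3 : ‖x₃‖ = r)
    (h12 : ‖x₁ - x₂‖ ≤ h) (h23 : ‖x₂ - x₃‖ ≤ h) (h13 : ‖x₁ - x₃‖ ≤ h)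
    (l₁ l₂ l₃ : ℝ) (hl₁ : 0 ≤ l₁) (hl₂ : 0 ≤ l₂) (hl₃ : 0 ≤ l₃)
    (hsum : l₁ + l₂ + l₃ = 1) :
    r ^ 2 - h ^ 2 / 3 ≤ ‖l₁ • x₁ + l₂ • x₂ + l₃ • x₃‖ ^ 2 ∧
      ‖l₁ • x₁ + l₂ • x₂ + l₃ • x₃‖ ^ 2 ≤ r ^ 2 := by
  have hbounds := norm_sum_smul_sq_mem_Icc_of_norm_eq univ ![l₁, l₂, l₃] ![x₁, x₂, x₃] r h
    (by simp [Fin.forall_fin_succ, hl₁, hl₂, hl₃]) (by simp [Fin.sum_univ_three, hsum])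
    (by simp [Fin.forall_fin_succ, h1, h2, h3])
    (by simp [Fin.forall_fin_succ, norm_sub_rev x₂ x₁, norm_sub_rev x₃ x₁, norm_sub_rev x₃ x₂,
      h12, h13, h23])
  have hcomb : ∑ i, ![l₁, l₂, l₃] i • ![x₁, x₂, x₃] i = l₁ • x₁ + l₂ • x₂ + l₃ • x₃ :=
    Fin.sum_univ_three _
  rw [hcomb, card_univ, Fintype.card_fin] at hbounds
  obtain ⟨hlower, hupper⟩ := hbounds
  exact ⟨by linarith, hupper⟩

theorem stmt_7 (r h : ℝ) (hr : 0 < r) (x₁ x₂ x₃ : EuclideanSpace ℝ (Fin 3))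
    (h1 : ‖x₁‖ = r) (h2 : ‖x₂‖ = r) (h3 : ‖x₃‖ = r)
    (h12 : ‖x₁ - x₂‖ ≤ h) (h23 : ‖x₂ - x₃‖ ≤ h) (h13 : ‖x₁ - x₃‖ ≤ h)
    (l₁ l₂ l₃ : ℝ) (hl₁ : 0 ≤ l₁) (hl₂ : 0 ≤ l₂) (hl₃ : 0 ≤ l₃)
    (hsum : l₁ + l₂ + l₃ = 1) :
    r ^ 2 - h ^ 2 / 3 ≤ ‖l₁ • x₁ + l₂ • x₂ + l₃ • x₃‖ ^ 2 ∧
      ‖l₁ • x₁ + l₂ • x₂ + l₃ • x₃‖ ^ 2 ≤ r ^ 2 :=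
  stmt_7_general r h x₁ x₂ x₃ h1 h2 h3 h12 h23 h13 l₁ l₂ l₃ hl₁ hl₂ hl₃ hsum
end

section
/- Let a, b, c ∈ ℝ³ and let 0 ≤ ε ≤ 1. Let ã, b̃, c̃ ∈ ℝ³ be componentwise relative perturbations, i.e., |ã_i − a_i| ≤ ε·|a_i|, |b̃_i − b_i| ≤ ε·|b_i|, and |c̃_i − c_i| ≤ ε·|c_i| for each i ∈ {1,2,3}. Then |⟨ã, b̃ × c̃⟩ − ⟨a, b × c⟩| ≤ 42·ε·‖a‖·‖b‖·‖c‖. -/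
open scoped RealInnerProductSpace

/-!
The triple product `⟪a, b × c⟫` is the determinant of the matrix with rows `a, b, c`, so by the
Leibniz formula it is a signed sum of `3! = 6` products `aᵢ bⱼ cₖ`. Perturbing each factor of a
product of three by a relative error `ε` moves it by at most `((1 + ε)³ - 1) |aᵢ bⱼ cₖ|`, which is
at most `7 ε ‖a‖ ‖b‖ ‖c‖` when `ε ≤ 1`; summing over the six terms gives the constant `42`.
-/

open Finset
open scoped Nat

section OrderedCommRing

variable {R : Type*} [CommRing R] [LinearOrder R] [IsStrictOrderedRing R]

theorem abs_prod_sub_prod_le {ι : Type*} [DecidableEq ι] (s : Finset ι) {x x' : ι → R} {ε : R}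
    (h : ∀ i ∈ s, |x' i - x i| ≤ ε * |x i|) :
    |∏ i ∈ s, x' i - ∏ i ∈ s, x i| ≤ ((1 + ε) ^ #s - 1) * ∏ i ∈ s, |x i| := by
  induction s using Finset.induction_on with
  | empty => simp
  | insert j s hj ih =>
    have hs := ih fun i hi ↦ h i (mem_insert_of_mem hi)
    have hxj := h j (mem_insert_self j s)
    have hP' : |∏ i ∈ s, x' i| ≤ (1 + ε) ^ #s * ∏ i ∈ s, |x i| := by
      have := abs_sub_abs_le_abs_sub (∏ i ∈ s, x' i) (∏ i ∈ s, x i)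
      rw [abs_prod s x] at this
      linarith
    rw [prod_insert hj, prod_insert hj, prod_insert hj, card_insert_of_notMem hj]
    calc |x' j * ∏ i ∈ s, x' i - x j * ∏ i ∈ s, x i|
        = |(x' j - x j) * ∏ i ∈ s, x' i + x j * (∏ i ∈ s, x' i - ∏ i ∈ s, x i)| := by congr 1; ring
      _ ≤ |x' j - x j| * |∏ i ∈ s, x' i| + |x j| * |∏ i ∈ s, x' i - ∏ i ∈ s, x i| := by
        grw [abs_add_le, abs_mul, abs_mul]
      _ ≤ ε * |x j| * ((1 + ε) ^ #s * ∏ i ∈ s, |x i|)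
          + |x j| * (((1 + ε) ^ #s - 1) * ∏ i ∈ s, |x i|) := by
        gcongr
        · exact (abs_nonneg _).trans hxj
      _ = ((1 + ε) ^ (#s + 1) - 1) * (|x j| * ∏ i ∈ s, |x i|) := by ring

theorem abs_det_sub_det_le {n : Type*} [Fintype n] [DecidableEq n] {M M' : Matrix n n R}
    {ε : R} (hε : 0 ≤ ε) {r : n → R}
    (hM' : ∀ i j, |M' i j - M i j| ≤ ε * |M i j|) (hr : ∀ i j, |M i j| ≤ r i) :
    |M'.det - M.det| ≤ (Fintype.card n)! * ((1 + ε) ^ Fintype.card n - 1) * ∏ i, r i := by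
  have hterm (σ : Equiv.Perm n) :
      |∏ i, M' (σ i) i - ∏ i, M (σ i) i| ≤ ((1 + ε) ^ Fintype.card n - 1) * ∏ i, r i := by
    calc |∏ i, M' (σ i) i - ∏ i, M (σ i) i|
        ≤ ((1 + ε) ^ Fintype.card n - 1) * ∏ i, |M (σ i) i| :=
          abs_prod_sub_prod_le univ fun i _ ↦ hM' (σ i) i
      _ ≤ ((1 + ε) ^ Fintype.card n - 1) * ∏ i, r (σ i) := by
        have : 0 ≤ (1 + ε) ^ Fintype.card n - 1 := sub_nonneg.2 (one_le_pow₀ (by linarith))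
        gcongr with i
        exact hr _ _
      _ = ((1 + ε) ^ Fintype.card n - 1) * ∏ i, r i := by rw [Equiv.prod_comp]
  calc |M'.det - M.det|
      = |∑ σ : Equiv.Perm n, Equiv.Perm.sign σ • (∏ i, M' (σ i) i - ∏ i, M (σ i) i)| := by
        simp only [Matrix.det_apply, ← sum_sub_distrib, smul_sub]
    _ ≤ ∑ σ : Equiv.Perm n, |∏ i, M' (σ i) i - ∏ i, M (σ i) i| :=
        (abs_sum_le_sum_abs _ _).trans (sum_le_sum fun σ _ ↦ by
          rw [Units.smul_def, abs_zsmul, Int.isUnit_iff_abs_eq.mp σ.sign.isUnit, one_smul])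
    _ ≤ ∑ _σ : Equiv.Perm n, ((1 + ε) ^ Fintype.card n - 1) * ∏ i, r i :=
        sum_le_sum fun σ _ ↦ hterm σ
    _ = _ := by simp [Fintype.card_perm, mul_assoc]

end OrderedCommRing

theorem inner_cross3_eq_det (a b c : EuclideanSpace ℝ (Fin 3)) :
    ⟪a, cross3 b c⟫ = Matrix.det ![(a : Fin 3 → ℝ), b, c] := by
  rw [cross3, EuclideanSpace.inner_eq_star_dotProduct, star_trivial, dotProduct_comm]
  exact triple_product_eq_det _ _ _

theorem stmt_10 (a b c : EuclideanSpace ℝ (Fin 3)) (ε : ℝ) (hε0 : 0 ≤ ε) (hε1 : ε ≤ 1)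
    (ta tb tc : EuclideanSpace ℝ (Fin 3))
    (ha : ∀ i : Fin 3, |ta i - a i| ≤ ε * |a i|)
    (hb : ∀ i : Fin 3, |tb i - b i| ≤ ε * |b i|)
    (hc : ∀ i : Fin 3, |tc i - c i| ≤ ε * |c i|) :
    |⟪ta, cross3 tb tc⟫ - ⟪a, cross3 b c⟫| ≤ 42 * ε * ‖a‖ * ‖b‖ * ‖c‖ := by
  have hcube : (1 + ε) ^ 3 - 1 ≤ 7 * ε := by
    nlinarith [mul_nonneg (mul_nonneg hε0 (sub_nonneg.2 hε1)) (by linarith : 0 ≤ ε + 4)]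
  have hdet := abs_det_sub_det_le (M := ![(a : Fin 3 → ℝ), b, c])
    (M' := ![(ta : Fin 3 → ℝ), tb, tc]) (r := ![‖a‖, ‖b‖, ‖c‖]) hε0
    (fun i ↦ by fin_cases i; exacts [ha, hb, hc])
    (fun i j ↦ by fin_cases i <;> exact (Real.norm_eq_abs _).symm.trans_le (PiLp.norm_apply_le _ j))
  rw [inner_cross3_eq_det, inner_cross3_eq_det]
  calc _ ≤ (3)! * ((1 + ε) ^ 3 - 1) * (‖a‖ * ‖b‖ * ‖c‖) := by
        simpa only [Fintype.card_fin, Fin.prod_univ_three, Matrix.cons_val, mul_assoc] using hdet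
    _ ≤ (3)! * (7 * ε) * (‖a‖ * ‖b‖ * ‖c‖) := by gcongr
    _ = 42 * ε * ‖a‖ * ‖b‖ * ‖c‖ := by norm_num [Nat.factorial]; ring
end

section
/- Let r > 0 and let x₁, x₂, x₃ ∈ ℝ³ with ‖x₁‖ = ‖x₂‖ = ‖x₃‖ = r and det[x₁,x₂,x₃] > 0 (counterclockwise orientation). Then for every (ξ,η) ∈ Δ, writing x = x(ξ,η) (which is nonzero), u = (r/‖x‖)·((x₂−x₁) − (⟨x, x₂−x₁⟩/⟨x,x⟩)·x), and v = (r/‖x‖)·((x₃−x₁) − (⟨x, x₃−x₁⟩/⟨x,x⟩)·x), one has ⟨x, u × v⟩ > 0; i.e., the normal u × v to the sphere induced by the radial projection points outward. -/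
open scoped RealInnerProductSpace

/-- The linear triangle map `x(ξ,η) = (1−ξ−η)x₁ + ξx₂ + ηx₃`. -/
noncomputable def triMap (x₁ x₂ x₃ : EuclideanSpace ℝ (Fin 3)) (ξ η : ℝ) :
    EuclideanSpace ℝ (Fin 3) :=
  (1 - ξ - η) • x₁ + ξ • x₂ + η • x₃

/-- The reference triangle `Δ = {(ξ,η) : ξ ≥ 0, η ≥ 0, ξ + η ≤ 1}`. -/
def refTri : Set (ℝ × ℝ) := {q | 0 ≤ q.1 ∧ 0 ≤ q.2 ∧ q.1 + q.2 ≤ 1}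

/-!
Both claims come from the triple product `⟪x, u × v⟫ = det[x, u, v]`. Subtracting multiples of `x`
from the last two columns does not change this determinant, so it equals
`(r/‖x‖)² det[x, x₂ - x₁, x₃ - x₁]`; and since `x = x₁ + ξ(x₂ - x₁) + η(x₃ - x₁)`, column operations
turn `det[x, x₂ - x₁, x₃ - x₁]` into `det[x₁, x₂, x₃] > 0`. The same identity shows that `x ≠ 0`.
-/

open scoped Matrix

lemma det3_eq_dotProduct_cross (a b c : EuclideanSpace ℝ (Fin 3)) :
    det3 a b c = a.ofLp ⬝ᵥ b.ofLp ⨯₃ c.ofLp := by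
  rw [det3, Matrix.det_transpose, triple_product_eq_det]
  rfl

lemma inner_cross3 (a b c : EuclideanSpace ℝ (Fin 3)) : ⟪a, cross3 b c⟫ = det3 a b c := by
  rw [det3_eq_dotProduct_cross, cross3, EuclideanSpace.inner_eq_star_dotProduct, star_trivial,
    dotProduct_comm]

lemma det3_smul_sub_smul (x a b : EuclideanSpace ℝ (Fin 3)) (c s t : ℝ) :
    det3 x (c • (a - s • x)) (c • (b - t • x)) = c ^ 2 * det3 x a b := by
  simp [det3_eq_dotProduct_cross, dotProduct_sub]
  ring

lemma det3_add_smul_add_smul (a b c : EuclideanSpace ℝ (Fin 3)) (s t : ℝ) :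
    det3 (a + s • b + t • c) b c = det3 a b c := by
  simp [det3_eq_dotProduct_cross, add_dotProduct, smul_dotProduct]

lemma det3_sub_sub (a b c : EuclideanSpace ℝ (Fin 3)) : det3 a (b - a) (c - a) = det3 a b c := by
  simp [det3_eq_dotProduct_cross, dotProduct_sub]

lemma triMap_eq_add_smul_add_smul (x₁ x₂ x₃ : EuclideanSpace ℝ (Fin 3)) (ξ η : ℝ) :
    triMap x₁ x₂ x₃ ξ η = x₁ + ξ • (x₂ - x₁) + η • (x₃ - x₁) := by
  simp only [triMap, smul_sub, sub_smul, one_smul]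
  abel

lemma det3_triMap_sub (x₁ x₂ x₃ : EuclideanSpace ℝ (Fin 3)) (ξ η : ℝ) :
    det3 (triMap x₁ x₂ x₃ ξ η) (x₂ - x₁) (x₃ - x₁) = det3 x₁ x₂ x₃ := by
  rw [triMap_eq_add_smul_add_smul, det3_add_smul_add_smul, det3_sub_sub]

lemma det3_zero_left (b c : EuclideanSpace ℝ (Fin 3)) : det3 0 b c = 0 := by
  simp [det3_eq_dotProduct_cross]

lemma triMap_ne_zero {x₁ x₂ x₃ : EuclideanSpace ℝ (Fin 3)} (h : det3 x₁ x₂ x₃ ≠ 0) (ξ η : ℝ) :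
    triMap x₁ x₂ x₃ ξ η ≠ 0 := by
  intro h0
  rw [← det3_triMap_sub x₁ x₂ x₃ ξ η, h0, det3_zero_left] at h
  exact h rfl

theorem stmt_12_general (r : ℝ) (hr : 0 < r) (x₁ x₂ x₃ : EuclideanSpace ℝ (Fin 3))
    (hdet : 0 < det3 x₁ x₂ x₃)
    (ξ η : ℝ) :
    triMap x₁ x₂ x₃ ξ η ≠ 0 ∧
      0 < ⟪triMap x₁ x₂ x₃ ξ η,
          cross3
            ((r / ‖triMap x₁ x₂ x₃ ξ η‖) •
              ((x₂ - x₁) -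
                (⟪triMap x₁ x₂ x₃ ξ η, x₂ - x₁⟫ /
                    ⟪triMap x₁ x₂ x₃ ξ η, triMap x₁ x₂ x₃ ξ η⟫) • triMap x₁ x₂ x₃ ξ η))
            ((r / ‖triMap x₁ x₂ x₃ ξ η‖) •
              ((x₃ - x₁) -
                (⟪triMap x₁ x₂ x₃ ξ η, x₃ - x₁⟫ /
                    ⟪triMap x₁ x₂ x₃ ξ η, triMap x₁ x₂ x₃ ξ η⟫) • triMap x₁ x₂ x₃ ξ η))⟫ := by
  have hx := triMap_ne_zero hdet.ne' ξ η
  refine ⟨hx, ?_⟩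
  rw [inner_cross3, det3_smul_sub_smul, det3_triMap_sub]
  have hx_norm : 0 < ‖triMap x₁ x₂ x₃ ξ η‖ := norm_pos_iff.mpr hx
  positivity

theorem stmt_12 (r : ℝ) (hr : 0 < r) (x₁ x₂ x₃ : EuclideanSpace ℝ (Fin 3))
    (h1 : ‖x₁‖ = r) (h2 : ‖x₂‖ = r) (h3 : ‖x₃‖ = r) (hdet : 0 < det3 x₁ x₂ x₃)
    (ξ η : ℝ) (hq : (ξ, η) ∈ refTri) :
    triMap x₁ x₂ x₃ ξ η ≠ 0 ∧
      0 < ⟪triMap x₁ x₂ x₃ ξ η,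
          cross3
            ((r / ‖triMap x₁ x₂ x₃ ξ η‖) •
              ((x₂ - x₁) -
                (⟪triMap x₁ x₂ x₃ ξ η, x₂ - x₁⟫ /
                    ⟪triMap x₁ x₂ x₃ ξ η, triMap x₁ x₂ x₃ ξ η⟫) • triMap x₁ x₂ x₃ ξ η))
            ((r / ‖triMap x₁ x₂ x₃ ξ η‖) •
              ((x₃ - x₁) -
                (⟪triMap x₁ x₂ x₃ ξ η, x₃ - x₁⟫ /
                    ⟪triMap x₁ x₂ x₃ ξ η, triMap x₁ x₂ x₃ ξ η⟫) • triMap x₁ x₂ x₃ ξ η))⟫ :=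
  stmt_12_general r hr x₁ x₂ x₃ hdet ξ η
end
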